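/- Let $z \in \mathbb{C}$ with $0 < |z| $ and $-\pi < \arg(z) < \pi$, let $a > 0$, and for $k \in \mathbb{Z}$ set $t_k = a(\ln|z| + i(\arg z + 2k\pi))$. Then $\Re\sqrt{-t_0} < \Re\sqrt{-t_k}$ for all $k \neq 0$, where $\sqrt{\cdot}$ is the principal square root; i.e., $t_0$ is the pole closest to the nonnegative real axis in the sense of the parabolic level sets $\Re\sqrt{-w} = \text{const}$. -/

import Mathlib

/-! On the principal branch, `Re √(-w) = √((‖w‖ - Re w) / 2)`. All poles `t_k` share the real
part `a log ‖z‖`, so `Re √(-t_k)` grows strictly with `|Im t_k| = a |arg z + 2kπ|`, which is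
smallest exactly at `k = 0` because `|arg z| < π`. -/

open Complex

theorem Complex.norm_lt_norm_of_re_eq_of_abs_im_lt {w v : ℂ} (hre : w.re = v.re)
    (him : |w.im| < |v.im|) : ‖w‖ < ‖v‖ := by
  have hsq : ‖w‖ ^ 2 < ‖v‖ ^ 2 := by
    rw [Complex.sq_norm, Complex.sq_norm, normSq_apply, normSq_apply, hre]
    nlinarith [sq_lt_sq.mpr him]
  exact lt_of_pow_lt_pow_left₀ 2 (norm_nonneg v) hsq

theorem Complex.re_neg_cpow_one_half (w : ℂ) :
    ((-w) ^ ((1 : ℂ) / 2)).re = √((‖w‖ - w.re) / 2) := by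
  rw [one_div, cpow_inv_two_re, norm_neg, neg_re, sub_eq_add_neg]

theorem Complex.re_neg_cpow_one_half_lt {w v : ℂ} (hre : w.re = v.re)
    (him : |w.im| < |v.im|) :
    ((-w) ^ ((1 : ℂ) / 2)).re < ((-v) ^ ((1 : ℂ) / 2)).re := by
  rw [re_neg_cpow_one_half, re_neg_cpow_one_half]
  apply Real.sqrt_lt_sqrt
  · linarith [re_le_norm w]
  · linarith [norm_lt_norm_of_re_eq_of_abs_im_lt hre him]

theorem abs_lt_abs_add_two_mul_int_mul {x c : ℝ} (hx : |x| < c) {k : ℤ} (hk : k ≠ 0) :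
    |x| < |x + 2 * k * c| := by
  have hk1 : (1 : ℝ) ≤ |(k : ℝ)| := by exact_mod_cast Int.one_le_abs hk
  have hc : 0 < c := (abs_nonneg x).trans_lt hx
  calc |x| < 2 * c - |x| := by linarith
    _ ≤ |2 * k * c| - |x| := by
        rw [abs_mul, abs_mul, abs_two, abs_of_pos hc]
        nlinarith
    _ ≤ |x + 2 * k * c| := by
        linarith [abs_add' (2 * k * c) x]

theorem pole_t0_closest_general (z : ℂ)
    (harg1 : -Real.pi < z.arg) (harg2 : z.arg < Real.pi) (a : ℝ) (ha : 0 < a)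
    (t : ℤ → ℂ)
    (ht : ∀ k : ℤ, t k = (a : ℂ) * (Real.log ‖z‖ +
      Complex.I * ((z.arg : ℂ) + 2 * (k : ℂ) * (Real.pi : ℂ)))) :
    ∀ k : ℤ, k ≠ 0 → ((-(t 0)) ^ ((1 : ℂ) / 2)).re < ((-(t k)) ^ ((1 : ℂ) / 2)).re := by
  intro k hk
  have hre : ∀ m : ℤ, (t m).re = a * Real.log ‖z‖ := fun m => by simp [ht m]
  have him : ∀ m : ℤ, (t m).im = a * (z.arg + 2 * m * Real.pi) := fun m => by simp [ht m]
  have harg : |z.arg| < |z.arg + 2 * k * Real.pi| :=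
    abs_lt_abs_add_two_mul_int_mul (abs_lt.mpr ⟨harg1, harg2⟩) hk
  apply re_neg_cpow_one_half_lt (by rw [hre, hre])
  rw [him, him, abs_mul, abs_mul, abs_of_pos ha]
  simpa using mul_lt_mul_of_pos_left harg ha

/-- For `|arg z| < π`, the pole `t₀` is strictly inside the parabola through any
other pole `t_k`: `Re √(-t₀) < Re √(-t_k)` for all `k ≠ 0` (principal square root). -/
theorem pole_t0_closest (z : ℂ) (hz : z ≠ 0)
    (harg1 : -Real.pi < z.arg) (harg2 : z.arg < Real.pi) (a : ℝ) (ha : 0 < a)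
    (t : ℤ → ℂ)
    (ht : ∀ k : ℤ, t k = (a : ℂ) * (Real.log ‖z‖ +
      Complex.I * ((z.arg : ℂ) + 2 * (k : ℂ) * (Real.pi : ℂ)))) :
    ∀ k : ℤ, k ≠ 0 → ((-(t 0)) ^ ((1 : ℂ) / 2)).re < ((-(t k)) ^ ((1 : ℂ) / 2)).re :=
  pole_t0_closest_general z harg1 harg2 a ha t ht
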